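/- For every fixed t ∈ ℝ, the function x ↦ Lf(x,t) (given by the explicit formula) has nonnegative x-derivative on (0, π): for x ∈ (0, π), ∂/∂x [Lf(x,t)] ≥ 0. -/

import Mathlib

/-!
With `m = e^{-t}` and `s = sin (x/2)`, `Lf` is a rational function of `s` minus
`(4/m) arctan (m s)`, and the `x`-derivative is `cos (x/2) / 2` times its `s`-derivative.
Writing `a = m²`, `u = s²`, the `s`-derivative is
`2 (P(a,u) / (1 + 2a - au)² - (1 + 3au) / (1 + au)²)`; after clearing denominators the
difference is `a u` times a polynomial whose coefficients are nonnegative as soon as `u ≤ 1`.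
-/

open Real

/-- The explicit formula for `Lf(·,t)`. -/
noncomputable def LfFun (t x : ℝ) : ℝ :=
  2 * Real.sin (x / 2) *
      (1 + 2 * Real.exp (-2 * t) + Real.exp (-4 * t) * Real.sin (x / 2) ^ 2) /
      (1 + Real.exp (-2 * t) * Real.sin (x / 2) ^ 2
        + 2 * Real.cos (x / 2) ^ 2 * Real.exp (-2 * t))
    - 4 * Real.exp t * Real.arctan (Real.exp (-t) * Real.sin (x / 2))
    + 2 * Real.sin (x / 2) / (1 + Real.exp (-2 * t) * Real.sin (x / 2) ^ 2)

/-- `Lf(x,t)` as a function of `m = e^{-t}` and `s = sin (x/2)`. -/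
noncomputable def lfReduced (m s : ℝ) : ℝ :=
  2 * s * (1 + 2 * m ^ 2 + m ^ 4 * s ^ 2) / (1 + 2 * m ^ 2 - m ^ 2 * s ^ 2)
    - 4 / m * arctan (m * s) + 2 * s / (1 + m ^ 2 * s ^ 2)

theorem LfFun_eq_lfReduced (t x : ℝ) :
    LfFun t x = lfReduced (exp (-t)) (sin (x / 2)) := by
  have h2 : exp (-2 * t) = exp (-t) ^ 2 := by rw [← exp_nat_mul]; ring_nf
  have h4 : exp (-4 * t) = exp (-t) ^ 4 := by rw [← exp_nat_mul]; ring_nf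
  have h1 : exp t = 1 / exp (-t) := by rw [exp_neg, one_div, inv_inv]
  rw [LfFun, lfReduced, h2, h4, h1, cos_sq']
  ring

theorem hasDerivAt_lfReduced {m : ℝ} (s : ℝ) (hm : m ≠ 0)
    (hD : 1 + 2 * m ^ 2 - m ^ 2 * s ^ 2 ≠ 0) :
    HasDerivAt (lfReduced m)
      (2 * (((1 + 2 * m ^ 2) ^ 2 + m ^ 2 * s ^ 2 * (1 + 2 * m ^ 2) * (1 + 3 * m ^ 2)
              - (m ^ 2) ^ 3 * (s ^ 2) ^ 2) / (1 + 2 * m ^ 2 - m ^ 2 * s ^ 2) ^ 2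
            - (1 + 3 * m ^ 2 * s ^ 2) / (1 + m ^ 2 * s ^ 2) ^ 2)) s := by
  have hL : 1 + m ^ 2 * s ^ 2 ≠ 0 := by positivity
  have hid := hasDerivAt_id' s
  have hsq := hasDerivAt_pow 2 s
  have hfrac₁ := ((hid.const_mul 2).fun_mul ((hsq.const_mul (m ^ 4)).const_add
    (1 + 2 * m ^ 2))).fun_div ((hsq.const_mul (m ^ 2)).const_sub (1 + 2 * m ^ 2)) hD
  have harctan := (hid.const_mul m).arctan.const_mul (4 / m)
  have hfrac₂ := (hid.const_mul 2).fun_div ((hsq.const_mul (m ^ 2)).const_add 1) hL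
  refine ((hfrac₁.sub harctan).add hfrac₂).congr_deriv ?_
  field_simp
  ring

theorem lf_key_inequality {a u : ℝ} (ha : 0 ≤ a) (hu : 0 ≤ u) (hu1 : u ≤ 1) :
    (1 + 3 * a * u) / (1 + a * u) ^ 2 ≤
      ((1 + 2 * a) ^ 2 + a * u * (1 + 2 * a) * (1 + 3 * a) - a ^ 3 * u ^ 2)
        / (1 + 2 * a - a * u) ^ 2 := by
  have hD : 0 < 1 + 2 * a - a * u := by nlinarith
  rw [div_le_div_iff₀ (by positivity) (by positivity)]
  have h25 : 0 ≤ 25 - 2 * u := by linarith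
  have h6 : 0 ≤ 6 - u := by linarith
  have hfactored : 0 ≤ a * u * (2 + 5 * a + 8 * a * u + 2 * a ^ 2 + a ^ 2 * u * (25 - 2 * u)
      + 16 * a ^ 3 * u + 3 * a ^ 3 * u ^ 2 + a ^ 4 * u ^ 2 * (6 - u)) := by positivity
  linear_combination hfactored

/-- For every fixed `t`, `x ↦ Lf(x,t)` has nonnegative derivative on `(0, π)`. -/
theorem stmt_7 (t x : ℝ) (hx : x ∈ Set.Ioo 0 Real.pi) :
    0 ≤ deriv (LfFun t) x := by
  obtain ⟨hx0, hxpi⟩ := hx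
  have hcos : 0 < cos (x / 2) := cos_pos_of_mem_Ioo ⟨by linarith [pi_pos], by linarith⟩
  have hs : sin (x / 2) ^ 2 ≤ 1 := sin_sq_le_one _
  set m := exp (-t)
  have hD : 1 + 2 * m ^ 2 - m ^ 2 * sin (x / 2) ^ 2 ≠ 0 := by nlinarith [exp_pos (-t)]
  have hsin : HasDerivAt (fun y => sin (y / 2)) (cos (x / 2) * (1 / 2)) x :=
    (hasDerivAt_sin _).comp x ((hasDerivAt_id x).div_const 2)
  have hF := (hasDerivAt_lfReduced _ (exp_pos _).ne' hD).comp x hsin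
  rw [show LfFun t = lfReduced m ∘ fun y => sin (y / 2) from funext (LfFun_eq_lfReduced t),
    hF.deriv]
  have hkey := sub_nonneg.2 (lf_key_inequality (sq_nonneg m) (sq_nonneg (sin (x / 2))) hs)
  positivity
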